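/- arXiv:2102.06947 — 5 statements merged into one kernel-verified Lean document; each statement's English description precedes it below -/
import Mathlib

section
/- Let r₀ = 4/27 and for r < r₀ define σ₀(r) as the root of σ³ - σ² + r = 0 given by σ₀(r) = (1/3)(1 + C₋(r) + C₊(r)) with C_±(r) = (3/2)(-4r + 2r₀ ± 4√(r(r - r₀)))^{1/3}. Then σ₀ is strictly decreasing on (-∞, r₀), with σ₀(0) = 1 and σ₀(r₀) = 2/3. -/
open Set

/-!
On `[2/3, ∞)` the map `x ↦ x³ - x²` is strictly increasing (its derivative `x(3x - 2)` is
positive there), so any branch of `σ³ - σ² + r = 0` taking values in `[2/3, ∞)` is strictly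
decreasing in `r`. The branch through `σ(0) = 1` stays in that range: it can reach `2/3` only at
`r = 4/27`, because `x³ - x² + 4/27 = (x - 2/3)²(x + 1/3)`, so on the interval `(-∞, 4/27)` it
never crosses `2/3`, and by continuity `σ(4/27)` is the double root `2/3`.
-/

lemma strictMonoOn_cube_sub_sq : StrictMonoOn (fun x : ℝ => x ^ 3 - x ^ 2) (Ici (2 / 3)) := by
  refine strictMonoOn_of_deriv_pos (convex_Ici _) (by fun_prop) fun x hx => ?_
  rw [interior_Ici, mem_Ioi] at hx
  have hderiv : deriv (fun x : ℝ => x ^ 3 - x ^ 2) x = x * (3 * x - 2) := by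
    simp only [differentiableAt_fun_id, DifferentiableAt.fun_pow, deriv_fun_sub, deriv_fun_pow,
      deriv_id'']
    ring
  rw [hderiv]
  exact mul_pos (by linarith) (by linarith)

lemma eq_two_thirds_of_cube_sub_sq_eq {x : ℝ} (hx : x ^ 3 - x ^ 2 + 4 / 27 = 0) (h : 2 / 3 ≤ x) :
    x = 2 / 3 := by
  have hfactor : (x - 2 / 3) ^ 2 * (x + 1 / 3) = 0 := by linear_combination hx
  have hsq := (mul_eq_zero.mp hfactor).resolve_right (by linarith)
  linarith [pow_eq_zero_iff two_ne_zero |>.mp hsq]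

lemma two_thirds_lt_of_cube_sub_sq_eq {σ : ℝ → ℝ}
    (hroot : ∀ r < (4 / 27 : ℝ), σ r ^ 3 - σ r ^ 2 + r = 0)
    (hcont : ContinuousOn σ (Iio (4 / 27))) (h0 : σ 0 = 1) {r : ℝ} (hr : r < 4 / 27) :
    2 / 3 < σ r := by
  by_contra! hle
  obtain ⟨t, ht, hσt⟩ := isPreconnected_Iio.intermediate_value hr
    (by norm_num : (0 : ℝ) ∈ Iio (4 / 27)) hcont ⟨hle, by norm_num [h0]⟩
  have hroot_t := hroot t ht
  rw [hσt] at hroot_t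
  linarith [mem_Iio.mp ht]

/-- The branch `σ₀` of the real cubic `σ³ - σ² + r = 0` with `σ₀(0) = 1` (the one given
explicitly by the Cardano formula with `C_±`) is strictly decreasing on `(-∞, r₀]`,
`r₀ = 4/27`, with `σ₀(0) = 1` and `σ₀(r₀) = 2/3`. -/
theorem stmt5 (σ : ℝ → ℝ)
    (hroot : ∀ r ≤ (4 / 27 : ℝ), (σ r) ^ 3 - (σ r) ^ 2 + r = 0)
    (hcont : ContinuousOn σ (Iic (4 / 27 : ℝ)))
    (h0 : σ 0 = 1) :
    StrictAntiOn σ (Iio (4 / 27 : ℝ)) ∧ StrictAntiOn σ (Iic (4 / 27 : ℝ)) ∧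
      σ 0 = 1 ∧ σ (4 / 27) = 2 / 3 := by
  have hlt : MapsTo σ (Iio (4 / 27)) (Ioi (2 / 3)) := fun r hr =>
    two_thirds_lt_of_cube_sub_sq_eq (fun r hr => hroot r hr.le)
      (hcont.mono Iio_subset_Iic_self) h0 hr
  have hend : σ (4 / 27) = 2 / 3 := by
    refine eq_two_thirds_of_cube_sub_sq_eq (hroot _ le_rfl) ?_
    have hclosure : σ (4 / 27) ∈ closure (σ '' Iio (4 / 27)) :=
      ((hcont _ self_mem_Iic).mono Iio_subset_Iic_self).mem_closure_image
        (by rw [closure_Iio]; exact self_mem_Iic)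
    simpa only [closure_Ioi, mem_Ici] using closure_mono hlt.image_subset hclosure
  have hge : MapsTo σ (Iic (4 / 27)) (Ici (2 / 3)) := by
    intro r hr
    rcases (mem_Iic.mp hr).lt_or_eq with h | rfl
    · exact mem_Ici.mpr (hlt h).le
    · exact hend ▸ self_mem_Ici
  have anti : StrictAntiOn σ (Iic (4 / 27)) := fun r hr s hs hrs => by
    rw [← strictMonoOn_cube_sub_sq.lt_iff_lt (hge hs) (hge hr)]
    linarith [hroot r hr, hroot s hs]
  exact ⟨anti.mono Iio_subset_Iic_self, anti, h0, hend⟩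
end

section
/- Let r₀ = 4/27 and σ₀ : (-∞, r₀) → ℝ the strictly decreasing root of σ³ - σ² + r = 0 with σ₀(0) = 1. For ε > 0 and any real v with εℓv/2 < r₀ and v ≠ 0, define C(v) = -ε⁻¹(σ₀(εℓv/2) - 1)(3σ₀(εℓv/2) - 1). Then C(v)·v > 0. -/
open Set

section

variable {σ : ℝ → ℝ} {r₀ r : ℝ}

theorem one_lt_of_strictAntiOn_of_neg (hanti : StrictAntiOn σ (Iic r₀)) (hr₀ : 0 ≤ r₀)
    (h0 : σ 0 = 1) (hr : r < 0) : 1 < σ r :=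
  h0 ▸ hanti (mem_Iic.2 (hr.le.trans hr₀)) (mem_Iic.2 hr₀) hr

theorem mem_Ioo_of_strictAntiOn_of_pos (hanti : StrictAntiOn σ (Iic r₀)) (h0 : σ 0 = 1)
    (hr0 : σ r₀ = 2 / 3) (hr : 0 < r) (hlt : r < r₀) : σ r ∈ Ioo (2 / 3) 1 :=
  ⟨hr0 ▸ hanti (mem_Iic.2 hlt.le) (mem_Iic.2 le_rfl) hlt,
    h0 ▸ hanti (mem_Iic.2 (hr.trans hlt).le) (mem_Iic.2 hlt.le) hr⟩

theorem sub_one_mul_three_mul_sub_one_mul_neg (hanti : StrictAntiOn σ (Iic r₀)) (hr₀ : 0 ≤ r₀)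
    (h0 : σ 0 = 1) (hr0 : σ r₀ = 2 / 3) (hne : r ≠ 0) (hlt : r < r₀) :
    (σ r - 1) * (3 * σ r - 1) * r < 0 := by
  rcases hne.lt_or_gt with hneg | hpos
  · have h1 := one_lt_of_strictAntiOn_of_neg hanti hr₀ h0 hneg
    exact mul_neg_of_pos_of_neg (by nlinarith) hneg
  · obtain ⟨h2, h1⟩ := mem_Ioo_of_strictAntiOn_of_pos hanti h0 hr0 hpos hlt
    exact mul_neg_of_neg_of_pos (by nlinarith) hpos

end

theorem stmt6_general (σ : ℝ → ℝ) (r₀ : ℝ) (hr₀ : r₀ = 4 / 27)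
    (hanti : StrictAntiOn σ (Iic r₀))
    (h0 : σ 0 = 1) (hr0 : σ r₀ = 2 / 3)
    (ε ℓ v : ℝ) (hε : 0 < ε) (hℓ : 0 < ℓ) (hv : v ≠ 0)
    (hlt : ε * ℓ * v / 2 < r₀) :
    0 < -(ε⁻¹ * (σ (ε * ℓ * v / 2) - 1) * (3 * σ (ε * ℓ * v / 2) - 1)) * v := by
  set r := ε * ℓ * v / 2 with hr
  have hsign : (σ r - 1) * (3 * σ r - 1) * r < 0 :=
    sub_one_mul_three_mul_sub_one_mul_neg hanti (by rw [hr₀]; norm_num) h0 hr0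
      (by positivity) hlt
  have hv_eq : v = 2 / (ε * ℓ) * r := by
    rw [hr]; field_simp
  have hscale : 0 < ε⁻¹ * (2 / (ε * ℓ)) := by positivity
  calc 0 < ε⁻¹ * (2 / (ε * ℓ)) * -((σ r - 1) * (3 * σ r - 1) * r) :=
        mul_pos hscale (neg_pos.2 hsign)
    _ = _ := by rw [hv_eq]; ring

/-- Positivity of the nonlinear Cummins operator: with `σ₀` the strictly decreasing root
of `σ³ - σ² + r = 0`, `σ₀(0) = 1`, `σ₀(r₀) = 2/3`, `r₀ = 4/27`, and
`C(v) = -ε⁻¹(σ₀(εℓv/2) - 1)(3σ₀(εℓv/2) - 1)`, one has `C(v)·v > 0` for `v ≠ 0`,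
`εℓv/2 < r₀`. -/
theorem stmt6 (σ : ℝ → ℝ) (r₀ : ℝ) (hr₀ : r₀ = 4 / 27)
    (hroot : ∀ r ≤ r₀, (σ r) ^ 3 - (σ r) ^ 2 + r = 0)
    (hanti : StrictAntiOn σ (Iic r₀))
    (h0 : σ 0 = 1) (hr0 : σ r₀ = 2 / 3)
    (ε ℓ v : ℝ) (hε : 0 < ε) (hℓ : 0 < ℓ) (hv : v ≠ 0)
    (hlt : ε * ℓ * v / 2 < r₀) :
    0 < -(ε⁻¹ * (σ (ε * ℓ * v / 2) - 1) * (3 * σ (ε * ℓ * v / 2) - 1)) * v :=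
  stmt6_general σ r₀ hr₀ hanti h0 hr0 ε ℓ v hε hℓ hv hlt
end

section
/- Let τ > 0, ℓ > 0, κ > 0 with τ² > κ² + ℓ²/3. Then the function P(s) = τ²s² + sℓ√(1 + κ²s²) + 1, defined on ℂ with Re s > 0 using the principal square root (positive real part), has no zeros with nonnegative real part; in particular P has no purely imaginary zeros and no zeros on [0,∞). -/
/-!
If `P(s) = 0` then squaring `sℓw = -(τ²s² + 1)` gives `(τ²s² + 1)² = ℓ²s²(1 + κ²s²)`, a quadratic
in `s²` with discriminant `ℓ²(ℓ² + 4κ² - 4τ²) < 0`; so `s²` is not real, which rules out the real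
and imaginary axes. In the open quadrant `η = Re s > 0`, `ω = Im s ≠ 0`, comparing imaginary parts
in `w² = 1 + κ²s²` gives `Re w · Im w = κ²ηω`, so `Re w > 0` and `ω Im w > 0`, and then every term
of `ω · Im P(s)` is positive.
-/

/-- `P(s)`, with the value `w` of `√(1 + κ²s²)` passed as a separate argument. -/
def cumminsDenom (τ ℓ : ℝ) (s w : ℂ) : ℂ := τ ^ 2 * s ^ 2 + s * ℓ * w + 1

section

variable {τ ℓ κ : ℝ} {s w : ℂ}

/-- The discriminant `ℓ²(ℓ² + 4κ² - 4τ²)` of this quadratic in `u` is negative. -/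
theorem sq_add_one_ne_of_lt {u : ℝ} (hℓ : ℓ ≠ 0) (h : κ ^ 2 + ℓ ^ 2 / 4 < τ ^ 2) :
    (τ ^ 2 * u + 1) ^ 2 ≠ ℓ ^ 2 * u * (1 + κ ^ 2 * u) := by
  have hdisc : ∀ d : ℝ, discrim (τ ^ 4 - ℓ ^ 2 * κ ^ 2) (2 * τ ^ 2 - ℓ ^ 2) 1 ≠ d ^ 2 := by
    intro d hd
    rw [discrim] at hd
    nlinarith [sq_nonneg d, mul_pos (sq_pos_of_ne_zero hℓ) (sub_pos.2 h)]
  intro hu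
  exact quadratic_ne_zero_of_discrim_ne_sq hdisc u (by linear_combination hu)

theorem sq_eq_of_cumminsDenom_eq_zero (hw : w ^ 2 = 1 + κ ^ 2 * s ^ 2)
    (hP : cumminsDenom τ ℓ s w = 0) :
    (τ ^ 2 * s ^ 2 + 1) ^ 2 = ℓ ^ 2 * s ^ 2 * (1 + κ ^ 2 * s ^ 2) := by
  rw [cumminsDenom] at hP
  linear_combination (τ ^ 2 * s ^ 2 + 1 - s * ℓ * w) * hP + ℓ ^ 2 * s ^ 2 * hw

theorem cumminsDenom_ne_zero_of_im_sq_eq_zero (hℓ : ℓ ≠ 0) (h : κ ^ 2 + ℓ ^ 2 / 4 < τ ^ 2)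
    (hw : w ^ 2 = 1 + κ ^ 2 * s ^ 2) (hs : (s ^ 2).im = 0) : cumminsDenom τ ℓ s w ≠ 0 := by
  intro hP
  have hsq : s ^ 2 = ((s ^ 2).re : ℂ) := Complex.ext rfl (by simpa using hs)
  have hquad := sq_eq_of_cumminsDenom_eq_zero hw hP
  rw [hsq] at hquad
  exact sq_add_one_ne_of_lt hℓ h (by exact_mod_cast hquad)

theorem re_pos_and_im_mul_im_pos (hκ : κ ≠ 0) (hw : w ^ 2 = 1 + κ ^ 2 * s ^ 2)
    (hw_re : 0 ≤ w.re) (hs_re : 0 < s.re) (hs_im : s.im ≠ 0) :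
    0 < w.re ∧ 0 < s.im * w.im := by
  have him : w.re * (s.im * w.im) = κ ^ 2 * s.re * s.im ^ 2 := by
    have := congrArg Complex.im hw
    simp only [pow_two, Complex.mul_im, Complex.add_im, Complex.one_im, Complex.ofReal_re,
      Complex.ofReal_im, Complex.mul_re] at this
    linear_combination s.im * this / 2
  have hpos : 0 < w.re * (s.im * w.im) := by rw [him]; positivity
  exact (pos_and_pos_or_neg_and_neg_of_mul_pos hpos).resolve_right fun hneg => hneg.1.not_ge hw_re

theorem im_mul_im_cumminsDenom_pos (hℓ : 0 < ℓ) (hs_re : 0 < s.re) (hs_im : s.im ≠ 0)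
    (hw_re : 0 < w.re) (hw_im : 0 < s.im * w.im) :
    0 < s.im * (cumminsDenom τ ℓ s w).im := by
  have hexp : s.im * (cumminsDenom τ ℓ s w).im
      = 2 * τ ^ 2 * s.re * s.im ^ 2 + ℓ * s.re * (s.im * w.im) + ℓ * s.im ^ 2 * w.re := by
    simp only [cumminsDenom, pow_two, Complex.mul_im, Complex.add_im, Complex.one_im,
      Complex.ofReal_re, Complex.ofReal_im, Complex.mul_re]
    ring
  rw [hexp]
  positivity

theorem cumminsDenom_ne_zero_of_re_pos_of_im_ne_zero (hℓ : 0 < ℓ) (hκ : κ ≠ 0)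
    (hw : w ^ 2 = 1 + κ ^ 2 * s ^ 2) (hw_re : 0 ≤ w.re) (hs_re : 0 < s.re) (hs_im : s.im ≠ 0) :
    cumminsDenom τ ℓ s w ≠ 0 := by
  obtain ⟨hw_re_pos, hw_im⟩ := re_pos_and_im_mul_im_pos hκ hw hw_re hs_re hs_im
  intro hP
  have hpos := im_mul_im_cumminsDenom_pos (τ := τ) hℓ hs_re hs_im hw_re_pos hw_im
  simp [hP] at hpos

end

theorem stmt7_general (τ ℓ κ : ℝ) (hℓ : 0 < ℓ) (hκ : 0 < κ)
    (h : κ ^ 2 + ℓ ^ 2 / 3 < τ ^ 2)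
    (r : ℂ → ℂ)
    (hr_sq : ∀ s : ℂ, (r s) ^ 2 = 1 + (κ : ℂ) ^ 2 * s ^ 2)
    (hr_re : ∀ s : ℂ, 0 ≤ (r s).re) :
    ∀ s : ℂ, 0 ≤ s.re → (τ : ℂ) ^ 2 * s ^ 2 + s * (ℓ : ℂ) * r s + 1 ≠ 0 := by
  intro s hs
  change cumminsDenom τ ℓ s (r s) ≠ 0
  by_cases hreal : s.re = 0 ∨ s.im = 0
  · have h' : κ ^ 2 + ℓ ^ 2 / 4 < τ ^ 2 := by linarith [sq_nonneg ℓ]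
    refine cumminsDenom_ne_zero_of_im_sq_eq_zero hℓ.ne' h' (hr_sq s) ?_
    rcases hreal with h0 | h0 <;> simp [pow_two, h0]
  · push Not at hreal
    exact cumminsDenom_ne_zero_of_re_pos_of_im_ne_zero hℓ hκ.ne' (hr_sq s) (hr_re s)
      (hs.lt_of_ne' hreal.1) hreal.2

/-- The denominator `P(s) = τ²s² + sℓ√(1+κ²s²) + 1` of the dispersive Cummins transfer
function, with the square root branch of nonnegative real part, has no zeros with
nonnegative real part (in particular none on the imaginary axis nor on `[0,∞)`),
provided `τ² > κ² + ℓ²/3`. -/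
theorem stmt7 (τ ℓ κ : ℝ) (hτ : 0 < τ) (hℓ : 0 < ℓ) (hκ : 0 < κ)
    (h : κ ^ 2 + ℓ ^ 2 / 3 < τ ^ 2)
    (r : ℂ → ℂ)
    (hr_sq : ∀ s : ℂ, (r s) ^ 2 = 1 + (κ : ℂ) ^ 2 * s ^ 2)
    (hr_re : ∀ s : ℂ, 0 ≤ (r s).re) :
    ∀ s : ℂ, 0 ≤ s.re → (τ : ℂ) ^ 2 * s ^ 2 + s * (ℓ : ℂ) * r s + 1 ≠ 0 :=
  stmt7_general τ ℓ κ hℓ hκ h r hr_sq hr_re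
end

section
/- Let κ > 0 and K̂(p) = 1/√(1 + κ²p²) (principal square root) for p in the open right half-plane ℂ₀ = {Re p > 0}. Then Re(p K̂(p)) ≥ 0 for all p ∈ ℂ₀; moreover, for every a > 0 there exists c_a > 0 such that Re(p K̂(p)) ≥ c_a for all p with Re p > a. -/
/-!
Put `q = κ p` and `w = √(1 + q²)`, so that `p K̂(p) = κ⁻¹ q / w`, `Re w > 0` and `w² = 1 + q²`.
Comparing real and imaginary parts of `w² = 1 + q²` gives `(Re w)² ≤ 1 + (Re q)²` and
`Re (q / w) ≥ Re q / (2 Re w)`, hence `Re (q / w) ≥ Re q / (2 (1 + Re q))`. The right-hand side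
is increasing in `Re q`, so `Re (p K̂(p)) ≥ a / (2 (1 + κ a))` whenever `Re p > a ≥ 0`.
-/

open Complex

namespace Complex

lemma sq_sqrt (z : ℂ) : z.sqrt ^ 2 = z :=
  cpow_ofNat_inv_pow z 2

lemma re_sqrt_pos {z : ℂ} (hz : z ∈ slitPlane) : 0 < z.sqrt.re := by
  rw [sqrt, cpow_inv_two_re, Real.sqrt_pos]
  have : 0 < ‖z‖ + z.re := by
    rcases mem_slitPlane_iff.mp hz with hre | him
    · linarith [norm_nonneg z]
    · linarith [neg_abs_le z.re, abs_re_lt_norm.mpr him]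
  positivity

lemma one_add_sq_mem_slitPlane {q : ℂ} (hq : q.re ≠ 0) : 1 + q ^ 2 ∈ slitPlane := by
  rw [mem_slitPlane_iff]
  by_cases him : q.im = 0
  · left
    simp only [add_re, one_re, sq, mul_re, him, mul_zero, sub_zero]
    nlinarith [mul_self_nonneg q.re]
  · right
    simp only [add_im, one_im, sq, mul_im, zero_add, mul_comm q.im, ← two_mul]
    exact mul_ne_zero two_ne_zero (mul_ne_zero hq him)

section SquareRootOfOneAddSq

variable {w q : ℂ} (h : w ^ 2 = 1 + q ^ 2)
include h

lemma re_sq_sub_im_sq_of_sq_eq_one_add_sq :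
    w.re ^ 2 - w.im ^ 2 = 1 + q.re ^ 2 - q.im ^ 2 := by
  have := congrArg re h
  simp only [sq, mul_re, add_re, one_re] at this
  linarith

lemma re_mul_im_of_sq_eq_one_add_sq : w.re * w.im = q.re * q.im := by
  have := congrArg im h
  simp only [sq, mul_im, add_im, one_im] at this
  linarith

lemma re_sq_le_of_sq_eq_one_add_sq : w.re ^ 2 ≤ 1 + q.re ^ 2 := by
  have hre := re_sq_sub_im_sq_of_sq_eq_one_add_sq h
  have him := re_mul_im_of_sq_eq_one_add_sq h
  have key : (1 + q.re ^ 2 - w.re ^ 2) * (w.re ^ 2 + q.im ^ 2) = q.im ^ 2 := by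
    linear_combination (-w.re ^ 2) * hre - (w.re * w.im + q.re * q.im) * him
  nlinarith [sq_nonneg q.im, sq_nonneg w.re]

lemma re_div_two_mul_re_le_re_div (hw : 0 < w.re) (hq : 0 ≤ q.re) :
    q.re / (2 * w.re) ≤ (q / w).re := by
  have hre := re_sq_sub_im_sq_of_sq_eq_one_add_sq h
  have him := re_mul_im_of_sq_eq_one_add_sq h
  have hN : 0 < normSq w := normSq_pos.mpr (fun h0 => by simp [h0] at hw)
  rw [div_re, ← add_div, div_le_div_iff₀ (by positivity) hN, normSq_apply]
  have key : (q.re * w.re + q.im * w.im) * (2 * w.re) - q.re * (w.re * w.re + w.im * w.im)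
      = q.re * (1 + q.re ^ 2 + q.im ^ 2) := by
    linear_combination q.re * hre + 2 * q.im * him
  linarith [mul_nonneg hq (by positivity : (0 : ℝ) ≤ 1 + q.re ^ 2 + q.im ^ 2)]

end SquareRootOfOneAddSq

lemma div_two_mul_one_add_re_le_re_div_sqrt {q : ℂ} (hq : 0 < q.re) :
    q.re / (2 * (1 + q.re)) ≤ (q / (1 + q ^ 2).sqrt).re := by
  set w := (1 + q ^ 2).sqrt
  have hw2 : w ^ 2 = 1 + q ^ 2 := sq_sqrt _
  have hw : 0 < w.re := re_sqrt_pos (one_add_sq_mem_slitPlane hq.ne')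
  have hw1 : w.re ≤ 1 + q.re := by
    nlinarith [re_sq_le_of_sq_eq_one_add_sq hw2]
  calc q.re / (2 * (1 + q.re)) ≤ q.re / (2 * w.re) := by gcongr
    _ ≤ (q / w).re := re_div_two_mul_re_le_re_div hw2 hw hq.le

end Complex

lemma re_mul_inv_cpow_one_add_sq_mul_sq (κ : ℝ) (hκ : κ ≠ 0) (p : ℂ) :
    (p * (((1 : ℂ) + (κ : ℂ) ^ 2 * p ^ 2) ^ ((1 : ℂ) / 2))⁻¹).re =
      ((κ * p) / (1 + (κ * p) ^ 2).sqrt).re / κ := by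
  rw [← mul_pow, one_div, mul_div_assoc, re_ofReal_mul, div_eq_mul_inv p, Complex.sqrt]
  field_simp

lemma div_two_mul_one_add_mul_le_re_mul_inv_cpow {κ a : ℝ} (hκ : 0 < κ) (ha : 0 ≤ a) {p : ℂ}
    (hp : a < p.re) :
    a / (2 * (1 + κ * a)) ≤ (p * (((1 : ℂ) + (κ : ℂ) ^ 2 * p ^ 2) ^ ((1 : ℂ) / 2))⁻¹).re := by
  have hq : (κ * p).re = κ * p.re := re_ofReal_mul κ p
  have hp0 : 0 < p.re := ha.trans_lt hp
  rw [re_mul_inv_cpow_one_add_sq_mul_sq κ hκ.ne' p, le_div_iff₀ hκ]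
  refine le_trans ?_ (div_two_mul_one_add_re_le_re_div_sqrt (q := κ * p) (by rw [hq]; positivity))
  rw [hq, div_mul_eq_mul_div, div_le_div_iff₀ (by positivity) (by positivity)]
  nlinarith [mul_pos hκ hκ]

/-- For `K̂(p) = (1+κ²p²)^{-1/2}` (principal square root), `Re(pK̂(p)) ≥ 0` on the right
half-plane, and on each half-plane `Re p > a` with `a > 0` there is a positive lower
bound `c_a`. -/
theorem stmt9 (κ : ℝ) (hκ : 0 < κ) :
    (∀ p : ℂ, 0 < p.re →
      0 ≤ (p * (((1 : ℂ) + (κ : ℂ) ^ 2 * p ^ 2) ^ ((1 : ℂ) / 2))⁻¹).re) ∧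
    ∀ a : ℝ, 0 < a → ∃ c : ℝ, 0 < c ∧ ∀ p : ℂ, a < p.re →
      c ≤ (p * (((1 : ℂ) + (κ : ℂ) ^ 2 * p ^ 2) ^ ((1 : ℂ) / 2))⁻¹).re := by
  refine ⟨fun p hp => ?_, fun a ha => ⟨a / (2 * (1 + κ * a)), by positivity, fun p hp => ?_⟩⟩
  · simpa using div_two_mul_one_add_mul_le_re_mul_inv_cpow hκ le_rfl hp
  · exact div_two_mul_one_add_mul_le_re_mul_inv_cpow hκ ha.le hp
end

section
/- Let κ > 0 and s ∈ ℂ with Re s > 0. The ODE system on (ℓ,∞): s ζ̂ + ∂ₓq̂ = 0, (1 - κ²∂ₓ²)s q̂ + ∂ₓζ̂ = 0, with boundary condition q̂(ℓ) = Q₀, has a unique solution that does not grow exponentially at infinity, given by q̂(x) = Q₀ exp(-(s/√(1+κ²s²))(x - ℓ)) and ζ̂(x) = q̂(x)/√(1+κ²s²), where √ denotes the principal square root. -/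
/-!
Eliminating `ζ = -q'/s` turns the system into `q'' = μ² q` with `μ = s/√(1+κ²s²)`, and
`Re μ > 0`: the principal root `r` has `Re r > 0`, and comparing imaginary parts in
`r² = 1 + κ²s²` gives `Re r · Re (s r̄) = Re s · ((Re r)² + κ² (Im s)²)`.
Both `q' + μ q` and `q' - μ q` solve first-order equations, so `q' + μ q = C e^{μ(x-ℓ)}`,
and `2μ q` differs from this growing mode by a decaying one. Subexponential growth of `q` then
forces `C = 0`, i.e. `q' = -μ q`, which gives both formulas.
-/

open Set Filter Asymptotics Complex

namespace Complex

lemma one_add_ofReal_sq_mul_sq_mem_slitPlane (κ : ℝ) {s : ℂ} (hs : 0 < s.re) :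
    1 + (κ : ℂ) ^ 2 * s ^ 2 ∈ slitPlane := by
  rw [mem_slitPlane_iff]
  by_cases him : s.im = 0
  · left
    simp only [add_re, one_re, pow_two, mul_re, mul_im, ofReal_re, ofReal_im, him]
    nlinarith [sq_nonneg (κ * s.re)]
  · by_cases hκ : κ = 0
    · simp [hκ]
    · right
      simp only [add_im, one_im, pow_two, mul_im, mul_re, ofReal_re, ofReal_im]
      have : 0 < κ * κ := mul_self_pos.mpr hκ
      have : s.re * s.im ≠ 0 := mul_ne_zero hs.ne' him
      intro h
      apply this
      nlinarith

lemma re_cpow_one_half_pos {w : ℂ} (hw : w ∈ slitPlane) : 0 < (w ^ (1 / 2 : ℂ)).re := by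
  obtain ⟨harg, hw0⟩ := mem_slitPlane_iff_arg.mp hw
  rw [show (1 / 2 : ℂ) = ((1 / 2 : ℝ) : ℂ) by push_cast; rfl, cpow_ofReal_re]
  refine mul_pos (Real.rpow_pos_of_pos (norm_pos_iff.mpr hw0) _)
    (Real.cos_pos_of_mem_Ioo ⟨?_, ?_⟩)
  · linarith [neg_pi_lt_arg w]
  · linarith [(arg_le_pi w).lt_of_ne harg]

lemma cpow_one_half_sq (w : ℂ) : (w ^ (1 / 2 : ℂ)) ^ 2 = w := by
  simp [one_div]

lemma re_div_pos_of_sq_eq_one_add {κ : ℝ} {s r : ℂ} (hs : 0 < s.re) (hr : 0 < r.re)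
    (hr2 : r ^ 2 = 1 + (κ : ℂ) ^ 2 * s ^ 2) : 0 < (s / r).re := by
  have him : r.re * r.im = κ ^ 2 * (s.re * s.im) := by
    have := congrArg im hr2
    simp only [pow_two, mul_im, add_im, one_im, mul_re, ofReal_re, ofReal_im] at this
    linarith
  have hnum : 0 < s.re * r.re + s.im * r.im := by
    have key : r.re * (s.re * r.re + s.im * r.im) = s.re * (r.re ^ 2 + κ ^ 2 * s.im ^ 2) := by
      linear_combination s.im * him
    have : 0 < r.re * (s.re * r.re + s.im * r.im) := by
      rw [key]; exact mul_pos hs (by positivity)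
    exact pos_of_mul_pos_right this hr.le
  rw [div_re, ← add_div]
  exact div_pos hnum (normSq_pos.mpr fun h => by simp [h] at hr)

end Complex

lemma hasDerivAt_cexp_mul_sub (c : ℂ) (a x : ℝ) :
    HasDerivAt (fun y : ℝ => cexp (c * (y - a))) (c * cexp (c * (x - a))) x := by
  have h : HasDerivAt (fun y : ℝ => c * ((y : ℂ) - a)) c x := by
    simpa using (((hasDerivAt_id x).ofReal_comp).sub_const (a : ℂ)).const_mul c
  simpa [mul_comm] using h.cexp

lemma norm_cexp_mul_sub (c : ℂ) (x a : ℝ) :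
    ‖cexp (c * (x - a))‖ = Real.exp (c.re * (x - a)) := by
  rw [norm_exp, ← ofReal_sub, re_mul_ofReal]

lemma isBigO_cexp_mul_sub {μ : ℂ} {ℓ ε : ℝ} (hε : μ.re ≤ ε) :
    (fun x : ℝ => cexp (μ * (x - ℓ))) =O[atTop] fun x => Real.exp (ε * x) := by
  rw [← isBigO_norm_left]
  simp only [norm_cexp_mul_sub]
  refine Real.isBigO_exp_comp_exp_comp.mpr (isBoundedUnder_of_eventually_le (a := -μ.re * ℓ) ?_)
  filter_upwards [eventually_ge_atTop 0] with x hx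
  simp only [Pi.sub_apply]
  nlinarith

lemma eq_zero_of_isBigO_cexp_mul_sub {μ c : ℂ} {ℓ ε : ℝ} (hε : ε < μ.re)
    (h : (fun x : ℝ => c * cexp (μ * (x - ℓ))) =O[atTop] fun x => Real.exp (ε * x)) :
    c = 0 := by
  by_contra hc
  have hO : (fun x : ℝ => Real.exp (μ.re * (x - ℓ))) =O[atTop] fun x => Real.exp (ε * x) := by
    have := (isBigO_norm_left.mpr h).const_mul_left ‖c‖⁻¹
    simpa [norm_mul, norm_cexp_mul_sub, hc] using this
  have ho : (fun x : ℝ => Real.exp (ε * x)) =o[atTop] fun x => Real.exp (μ.re * (x - ℓ)) := by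
    refine Real.isLittleO_exp_comp_exp_comp.mpr ?_
    have : Tendsto (fun x : ℝ => (μ.re - ε) * x - μ.re * ℓ) atTop atTop :=
      tendsto_atTop_add_const_right _ _ (tendsto_id.const_mul_atTop (sub_pos.mpr hε))
    convert this using 2; ring
  exact isLittleO_irrefl (.of_forall fun x => (Real.exp_pos _).ne') (hO.trans_isLittleO ho)

theorem eq_cexp_smul_of_hasDerivAt {E : Type*} [NormedAddCommGroup E] [NormedSpace ℂ E]
    {f : ℝ → E} {c : ℂ} {a : ℝ} (hf : ∀ x ∈ Ici a, HasDerivAt f (c • f x) x) :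
    ∀ x ∈ Ici a, f x = cexp (c * (x - a)) • f a := by
  set g : ℝ → E := fun x => cexp (-c * (x - a)) • f x
  have hg : ∀ x ∈ Ici a, HasDerivAt g 0 x := by
    intro x hx
    have h := (hasDerivAt_cexp_mul_sub (-c) a x).smul (hf x hx)
    have h0 : cexp (-c * (x - a)) * c + -c * cexp (-c * (x - a)) = 0 := by ring
    rwa [smul_smul, ← add_smul, h0, zero_smul] at h
  have hconst : ∀ x ∈ Ici a, g x = f a := by
    intro x hx
    have := constant_of_has_deriv_right_zero (f := g) (a := a) (b := x)
      (fun y hy => (hg y hy.1).continuousAt.continuousWithinAt)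
      (fun y hy => (hg y hy.1).hasDerivWithinAt) x (right_mem_Icc.mpr hx)
    simpa [g] using this
  intro x hx
  rw [← hconst x hx, smul_smul, ← exp_add]
  simp

theorem eq_neg_mul_of_hasDerivAt_sq_mul_of_isBigO {q q' : ℝ → ℂ} {μ : ℂ} {ℓ ε : ℝ}
    (hε₀ : 0 ≤ ε) (hε : ε < μ.re) (hq : ∀ x ∈ Ici ℓ, HasDerivAt q (q' x) x)
    (hq' : ∀ x ∈ Ici ℓ, HasDerivAt q' (μ ^ 2 * q x) x)
    (hgrowth : q =O[atTop] fun x => Real.exp (ε * x)) :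
    ∀ x ∈ Ici ℓ, q' x = -μ * q x := by
  have hgrowing := eq_cexp_smul_of_hasDerivAt (f := fun x => q' x + μ * q x) (c := μ)
    fun x hx => by
    convert (hq' x hx).fun_add ((hq x hx).const_mul μ) using 1
    rw [smul_eq_mul]; ring
  have hdecaying := eq_cexp_smul_of_hasDerivAt (f := fun x => q' x - μ * q x) (c := -μ)
    fun x hx => by
    convert (hq' x hx).fun_sub ((hq x hx).const_mul μ) using 1
    rw [smul_eq_mul]; ring
  have hmode : q' ℓ + μ * q ℓ = 0 := by
    refine eq_zero_of_isBigO_cexp_mul_sub hε (ℓ := ℓ) ?_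
    have hsplit : (fun x : ℝ => 2 * μ * q x + (q' ℓ - μ * q ℓ) * cexp (-μ * (x - ℓ)))
        =ᶠ[atTop] fun x : ℝ => (q' ℓ + μ * q ℓ) * cexp (μ * (x - ℓ)) := by
      filter_upwards [eventually_ge_atTop ℓ] with x hx
      have h1 := hgrowing x hx
      have h2 := hdecaying x hx
      simp only [smul_eq_mul] at h1 h2
      linear_combination h1 - h2
    refine IsBigO.congr' ?_ hsplit EventuallyEq.rfl
    exact (hgrowth.const_mul_left _).add
      ((isBigO_cexp_mul_sub (by simp; linarith)).const_mul_left _)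
  intro x hx
  have h := hgrowing x hx
  simp only [hmode, smul_zero] at h
  linear_combination h

lemma eqOn_neg_deriv_div_of_boussinesq {ℓ : ℝ} {s : ℂ} {ζ q : ℝ → ℂ} (hs : s ≠ 0)
    (heq1 : ∀ x ∈ Ici ℓ, s * ζ x + deriv q x = 0) :
    EqOn ζ (fun x => -deriv q x / s) (Ici ℓ) :=
  fun x hx => by
    field_simp
    linear_combination heq1 x hx

lemma deriv_deriv_eq_of_boussinesq {κ ℓ : ℝ} {s : ℂ} {ζ q : ℝ → ℂ} (hs : s ≠ 0)
    (hq : ContDiff ℝ 2 q)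
    (heq1 : ∀ x ∈ Ici ℓ, s * ζ x + deriv q x = 0)
    (heq2 : ∀ x ∈ Ici ℓ, s * q x - (κ : ℂ) ^ 2 * s * deriv (deriv q) x + deriv ζ x = 0) :
    ∀ x ∈ Ici ℓ, (1 + (κ : ℂ) ^ 2 * s ^ 2) * deriv (deriv q) x = s ^ 2 * q x := by
  have hζ := eqOn_neg_deriv_div_of_boussinesq hs heq1
  -- `ζ = -q'/s` holds only on `Ici ℓ`, so `ζ'` is known in the interior;
  -- continuity reaches `ℓ`.
  have hinterior : EqOn (fun x => (1 + (κ : ℂ) ^ 2 * s ^ 2) * deriv (deriv q) x - s ^ 2 * q x) 0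
      (Ioi ℓ) := fun x hx => by
    have hζ' : deriv ζ x = -deriv (deriv q) x / s := by
      rw [(hζ.eventuallyEq_of_mem (Ici_mem_nhds hx)).deriv_eq, deriv_div_const, deriv.fun_neg]
    have h := heq2 x (Ioi_subset_Ici_self hx)
    rw [hζ'] at h
    field_simp at h
    simp only [Pi.zero_apply]
    linear_combination -h
  have hcont : Continuous fun x => (1 + (κ : ℂ) ^ 2 * s ^ 2) * deriv (deriv q) x - s ^ 2 * q x :=
    ((ContDiff.deriv' (n := 1) hq).continuous_deriv_one.const_mul _).sub (hq.continuous.const_mul _)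
  intro x hx
  have := hinterior.closure hcont continuous_const (closure_Ioi ℓ ▸ hx)
  exact sub_eq_zero.mp this

theorem stmt10_general (κ ℓ : ℝ) (s : ℂ) (hs : 0 < s.re) (Q₀ : ℂ)
    (ζ q : ℝ → ℂ)
    (hq : ContDiff ℝ 2 q)
    (heq1 : ∀ x ∈ Ici ℓ, s * ζ x + deriv q x = 0)
    (heq2 : ∀ x ∈ Ici ℓ, s * q x - (κ : ℂ) ^ 2 * s * deriv (deriv q) x + deriv ζ x = 0)
    (hbc : q ℓ = Q₀)
    (hgrowth : ∀ ε : ℝ, 0 < ε → ∃ C : ℝ, ∀ x ∈ Ici ℓ, ‖q x‖ ≤ C * Real.exp (ε * x)) :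
    ∀ x ∈ Ici ℓ,
      q x = Q₀ * Complex.exp (-(s / (((1 : ℂ) + (κ : ℂ) ^ 2 * s ^ 2) ^ ((1 : ℂ) / 2)))
          * ((x : ℂ) - (ℓ : ℂ))) ∧
      ζ x = q x / (((1 : ℂ) + (κ : ℂ) ^ 2 * s ^ 2) ^ ((1 : ℂ) / 2)) := by
  set r := ((1 : ℂ) + (κ : ℂ) ^ 2 * s ^ 2) ^ ((1 : ℂ) / 2)
  have hr : 0 < r.re := re_cpow_one_half_pos (one_add_ofReal_sq_mul_sq_mem_slitPlane κ hs)
  have hr2 : r ^ 2 = 1 + (κ : ℂ) ^ 2 * s ^ 2 := cpow_one_half_sq _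
  have hr0 : r ≠ 0 := fun h => by simp [h] at hr
  have hs0 : s ≠ 0 := fun h => by simp [h] at hs
  have hμ : 0 < (s / r).re := re_div_pos_of_sq_eq_one_add hs hr hr2
  have hq' : ∀ x ∈ Ici ℓ, HasDerivAt (deriv q) ((s / r) ^ 2 * q x) x := fun x hx => by
    have h := deriv_deriv_eq_of_boussinesq hs0 hq heq1 heq2 x hx
    rw [← hr2] at h
    have h' : deriv (deriv q) x = (s / r) ^ 2 * q x := by
      rw [div_pow, div_mul_eq_mul_div, eq_div_iff (pow_ne_zero 2 hr0)]
      linear_combination h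
    exact h' ▸ ((ContDiff.deriv' (n := 1) hq).differentiable one_ne_zero x).hasDerivAt
  have hO : q =O[atTop] fun x => Real.exp ((s / r).re / 2 * x) := by
    obtain ⟨C, hC⟩ := hgrowth _ (half_pos hμ)
    refine IsBigO.of_bound C ?_
    filter_upwards [eventually_ge_atTop ℓ] with x hx
    simpa using hC x hx
  have hqd : ∀ x, HasDerivAt q (deriv q x) x :=
    fun x => (hq.differentiable (by norm_num) x).hasDerivAt
  have hdq := eq_neg_mul_of_hasDerivAt_sq_mul_of_isBigO (half_pos hμ).le (half_lt_self hμ)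
    (fun x _ => hqd x) hq' hO
  have hqx := eq_cexp_smul_of_hasDerivAt (c := -(s / r)) fun x hx => hdq x hx ▸ hqd x
  intro x hx
  refine ⟨?_, ?_⟩
  · rw [hqx x hx, hbc, smul_eq_mul, mul_comm, neg_mul]
  · rw [eqOn_neg_deriv_div_of_boussinesq hs0 heq1 hx]
    simp only [hdq x hx]
    field_simp

/-- The Laplace-transformed linear Boussinesq system on `(ℓ,∞)` with boundary datum
`q̂(ℓ) = Q₀` has a unique solution with no exponential growth, given by the decaying
exponential `q̂(x) = Q₀ e^{-(s/√(1+κ²s²))(x-ℓ)}`, `ζ̂ = q̂/√(1+κ²s²)`. -/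
theorem stmt10 (κ ℓ : ℝ) (hκ : 0 < κ) (s : ℂ) (hs : 0 < s.re) (Q₀ : ℂ)
    (ζ q : ℝ → ℂ)
    (hq : ContDiff ℝ 2 q) (hζ : ContDiff ℝ 1 ζ)
    (heq1 : ∀ x ∈ Ici ℓ, s * ζ x + deriv q x = 0)
    (heq2 : ∀ x ∈ Ici ℓ, s * q x - (κ : ℂ) ^ 2 * s * deriv (deriv q) x + deriv ζ x = 0)
    (hbc : q ℓ = Q₀)
    (hgrowth : ∀ ε : ℝ, 0 < ε → ∃ C : ℝ, ∀ x ∈ Ici ℓ, ‖q x‖ ≤ C * Real.exp (ε * x)) :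
    ∀ x ∈ Ici ℓ,
      q x = Q₀ * Complex.exp (-(s / (((1 : ℂ) + (κ : ℂ) ^ 2 * s ^ 2) ^ ((1 : ℂ) / 2)))
          * ((x : ℂ) - (ℓ : ℂ))) ∧
      ζ x = q x / (((1 : ℂ) + (κ : ℂ) ^ 2 * s ^ 2) ^ ((1 : ℂ) / 2)) :=
  stmt10_general κ ℓ s hs Q₀ ζ q hq heq1 heq2 hbc hgrowth
end
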